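/- arXiv:2401.10688 — 6 statements merged into one kernel-verified Lean document; each statement's English description precedes it below -/
import Mathlib

section
/- Let C be an element of the unraveling Reed–Solomon code C (i.e., Σ_{i,j} C_{i,j}·β_{i,j}^m = 0 for all 0 ≤ m ≤ N−K−1). For each 0 ≤ h ≤ ℓ−1, define the unraveled row U_{i,h} := Σ_{j=1}^{ℓ} C_{i,j}·β_{i,j}^h. Then the row (U_{1,h},…,U_{n,h}) is a codeword of the generalized Reed–Solomon code of length n with labels α_1,…,α_n and n−k_h parity symbols; that is, Σ_{i=1}^n U_{i,h}·α_i^m = 0 for all 0 ≤ m ≤ n−k_h−1. -/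
open Finset Polynomial

/-- unraveled rows of a codeword of the unraveling Reed–Solomon code
are codewords of the corresponding generalized Reed–Solomon row codes. -/
theorem unravel_row_is_GRS_codeword {F : Type*} [Field F]
    (n ℓ k a : ℕ) (hℓ : 1 ≤ ℓ) (hk : k < n) (ha : a < ℓ)
    (G : Polynomial F) (hGdeg : G.natDegree = ℓ)
    (β : Fin n → Fin ℓ → F)
    (hβ : Function.Injective (fun p : Fin n × Fin ℓ => β p.1 p.2))
    (α : Fin n → F) (hα : ∀ i j, G.eval (β i j) = α i)
    (C : Fin n → Fin ℓ → F)
    (hC : ∀ m < ℓ * n - (ℓ * k + a), ∑ i, ∑ j, C i j * β i j ^ m = 0)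
    (U : Fin n → Fin ℓ → F)
    (hU : ∀ i h, U i h = ∑ j, C i j * β i j ^ (h : ℕ))
    (h : Fin ℓ) (kh : ℕ) (hkh : kh = if (h : ℕ) < ℓ - a then k else k + 1) :
    ∀ m < n - kh, ∑ i, U i h * α i ^ m = 0 := by
  intro m hm
  set P : Polynomial F := X ^ (h : ℕ) * G ^ m with hP
  -- degree bound
  obtain ⟨s, hs⟩ : ∃ s, n = k + s := ⟨n - k, by omega⟩
  have hdegP : P.natDegree ≤ (h : ℕ) + m * ℓ := by
    calc P.natDegree ≤ (X ^ (h : ℕ) : Polynomial F).natDegree + (G ^ m).natDegree :=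
          natDegree_mul_le
      _ ≤ (h : ℕ) + m * ℓ := by
          gcongr
          · exact (natDegree_X_pow _).le
          · calc (G ^ m).natDegree ≤ m * G.natDegree := natDegree_pow_le
              _ = m * ℓ := by rw [hGdeg]
  have hh : (h : ℕ) < ℓ := h.isLt
  have hbound : (h : ℕ) + m * ℓ < ℓ * n - (ℓ * k + a) := by
    have hNK : ℓ * n - (ℓ * k + a) = s * ℓ - a := by
      subst hs
      have : ℓ * (k + s) = ℓ * k + s * ℓ := by ring
      omega
    rw [hNK]
    rcases Nat.lt_or_ge (h : ℕ) (ℓ - a) with hc | hc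
    · have hm1 : m + 1 ≤ s := by
        rw [hkh, if_pos hc] at hm; omega
      have h1 : (m + 1) * ℓ ≤ s * ℓ := Nat.mul_le_mul_right ℓ hm1
      have h2 : m * ℓ + ℓ = (m + 1) * ℓ := by ring
      generalize m * ℓ = A at *
      generalize s * ℓ = B at *
      omega
    · have hm2 : m + 2 ≤ s := by
        rw [hkh, if_neg (by omega)] at hm; omega
      have h1 : (m + 2) * ℓ ≤ s * ℓ := Nat.mul_le_mul_right ℓ hm2
      have h2 : m * ℓ + 2 * ℓ = (m + 2) * ℓ := by ring
      generalize m * ℓ = A at *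
      generalize s * ℓ = B at *
      omega
  have hkey : ∀ t ∈ Finset.range (P.natDegree + 1),
      P.coeff t * ∑ i, ∑ j, C i j * β i j ^ t = 0 := by
    intro t ht
    rw [Finset.mem_range] at ht
    rw [hC t (by omega), mul_zero]
  calc ∑ i, U i h * α i ^ m
      = ∑ i, ∑ j, C i j * P.eval (β i j) := by
        refine Finset.sum_congr rfl fun i _ => ?_
        rw [hU, Finset.sum_mul]
        refine Finset.sum_congr rfl fun j _ => ?_
        rw [hP, eval_mul, eval_pow, eval_pow, eval_X, hα]
        ring
    _ = ∑ i, ∑ j, ∑ t ∈ Finset.range (P.natDegree + 1),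
          P.coeff t * (C i j * β i j ^ t) := by
        refine Finset.sum_congr rfl fun i _ => Finset.sum_congr rfl fun j _ => ?_
        rw [eval_eq_sum_range, Finset.mul_sum]
        exact Finset.sum_congr rfl fun t _ => by ring
    _ = ∑ i, ∑ t ∈ Finset.range (P.natDegree + 1),
          ∑ j, P.coeff t * (C i j * β i j ^ t) :=
        Finset.sum_congr rfl fun i _ => Finset.sum_comm
    _ = ∑ t ∈ Finset.range (P.natDegree + 1),
          ∑ i, ∑ j, P.coeff t * (C i j * β i j ^ t) := Finset.sum_comm
    _ = ∑ t ∈ Finset.range (P.natDegree + 1),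
          P.coeff t * ∑ i, ∑ j, C i j * β i j ^ t := by
        refine Finset.sum_congr rfl fun t _ => ?_
        simp [Finset.mul_sum]
    _ = 0 := Finset.sum_eq_zero hkey
end

section
/- Assume additionally that the labels α_1,…,α_n are pairwise distinct. Then the unraveling map, which sends C ∈ C to the array U with U_{i,h} := Σ_{j=1}^{ℓ} C_{i,j}·β_{i,j}^h, is an F-linear bijection from C onto the interleaved code consisting of all arrays U ∈ F^{n×ℓ} such that for every 0 ≤ h ≤ ℓ−1 the row (U_{1,h},…,U_{n,h}) satisfies Σ_{i=1}^n U_{i,h}·α_i^m = 0 for all 0 ≤ m ≤ n−k_h−1. -/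
open Finset Polynomial

lemma sum_eval_expand {F : Type*} [CommRing F] {ι : Type*} (s : Finset ι)
    (c x : ι → F) (p : Polynomial F) :
    ∑ t ∈ s, c t * p.eval (x t) = ∑ m ∈ p.support, p.coeff m * ∑ t ∈ s, c t * x t ^ m := by
  calc ∑ t ∈ s, c t * p.eval (x t)
      = ∑ t ∈ s, ∑ m ∈ p.support, p.coeff m * (c t * x t ^ m) := by
        refine Finset.sum_congr rfl fun t _ => ?_
        rw [Polynomial.eval_eq_sum, Polynomial.sum, Finset.mul_sum]
        exact Finset.sum_congr rfl fun m _ => by ring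
    _ = _ := by
        rw [Finset.sum_comm]
        exact Finset.sum_congr rfl fun m _ => by rw [Finset.mul_sum]

lemma sum_eval_zero_of_pow {F : Type*} [CommRing F] {ι : Type*} {s : Finset ι}
    {c x : ι → F} {D : ℕ} (h0 : ∀ m < D, ∑ t ∈ s, c t * x t ^ m = 0)
    {p : Polynomial F} (hp : ∀ m ∈ p.support, m < D) :
    ∑ t ∈ s, c t * p.eval (x t) = 0 := by
  rw [sum_eval_expand]
  exact Finset.sum_eq_zero fun m hm => by rw [h0 m (hp m hm), mul_zero]

lemma sum_pow_zero_of_eval {F : Type*} [Field F] {ι : Type*} {s : Finset ι}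
    {c x : ι → F} {D ℓ : ℕ} (hℓ : 1 ≤ ℓ) {G : Polynomial F} (hGdeg : G.natDegree = ℓ)
    (hG : ∀ h q : ℕ, h < ℓ → h + ℓ * q < D →
      ∑ t ∈ s, c t * (x t ^ h * G.eval (x t) ^ q) = 0) :
    ∀ m < D, ∑ t ∈ s, c t * x t ^ m = 0 := by
  have hG0 : G ≠ 0 := by
    intro h; rw [h, Polynomial.natDegree_zero] at hGdeg; omega
  have hc0 : G.leadingCoeff ≠ 0 := Polynomial.leadingCoeff_ne_zero.mpr hG0
  intro m
  induction m using Nat.strong_induction_on with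
  | _ m IH =>
    intro hmD
    set h := m % ℓ with hhdef
    set q := m / ℓ with hqdef
    have hm : h + ℓ * q = m := Nat.mod_add_div m ℓ
    have hhlt : h < ℓ := Nat.mod_lt m hℓ
    set p : Polynomial F :=
      Polynomial.C (G.leadingCoeff⁻¹ ^ q) * (Polynomial.X ^ h * G ^ q) with hpdef
    have hXG : (Polynomial.X ^ h * G ^ q : Polynomial F).natDegree = m := by
      rw [Polynomial.natDegree_mul (pow_ne_zero _ Polynomial.X_ne_zero)
        (pow_ne_zero _ hG0), Polynomial.natDegree_X_pow, Polynomial.natDegree_pow, hGdeg,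
        mul_comm]
      exact hm
    have hpm : p.coeff m = 1 := by
      rw [hpdef, Polynomial.coeff_C_mul, ← hXG, Polynomial.coeff_natDegree]
      simp only [Polynomial.leadingCoeff_mul, Polynomial.leadingCoeff_pow,
        Polynomial.leadingCoeff_X, one_pow, one_mul]
      rw [← mul_pow, inv_mul_cancel₀ hc0, one_pow]
    have hple : p.natDegree ≤ m :=
      le_trans (Polynomial.natDegree_C_mul_le _ _) (le_of_eq hXG)
    have hr : ∀ nn ∈ (p - Polynomial.X ^ m).support, nn < m := by
      intro nn hnn
      by_contra hge
      push_neg at hge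
      refine (Polynomial.mem_support_iff.mp hnn) ?_
      rcases eq_or_lt_of_le hge with rfl | hlt
      · rw [Polynomial.coeff_sub, hpm, Polynomial.coeff_X_pow]
        simp
      · rw [Polynomial.coeff_sub,
          Polynomial.coeff_eq_zero_of_natDegree_lt (lt_of_le_of_lt hple hlt),
          Polynomial.coeff_X_pow, if_neg (by omega), sub_zero]
    have hsum : ∑ t ∈ s, c t * x t ^ m
        = ∑ t ∈ s, c t * p.eval (x t)
          - ∑ t ∈ s, c t * (p - Polynomial.X ^ m).eval (x t) := by
      rw [← Finset.sum_sub_distrib]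
      refine Finset.sum_congr rfl fun t _ => ?_
      rw [Polynomial.eval_sub, Polynomial.eval_pow, Polynomial.eval_X]
      ring
    have h1 : ∑ t ∈ s, c t * p.eval (x t) = 0 := by
      have h2 := hG h q hhlt (by rw [hm]; exact hmD)
      calc ∑ t ∈ s, c t * p.eval (x t)
          = G.leadingCoeff⁻¹ ^ q * ∑ t ∈ s, c t * (x t ^ h * G.eval (x t) ^ q) := by
            rw [Finset.mul_sum]
            refine Finset.sum_congr rfl fun t _ => ?_
            rw [hpdef]
            simp only [Polynomial.eval_mul, Polynomial.eval_C, Polynomial.eval_pow,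
              Polynomial.eval_X]
            ring
        _ = 0 := by rw [h2, mul_zero]
    have h3 : ∑ t ∈ s, c t * (p - Polynomial.X ^ m).eval (x t) = 0 := by
      rw [sum_eval_expand]
      refine Finset.sum_eq_zero fun nn hnn => ?_
      rw [IH nn (hr nn hnn) (lt_trans (hr nn hnn) hmD), mul_zero]
    rw [hsum, h1, h3, sub_zero]

lemma vand_bij {F : Type*} [Field F] {ℓ : ℕ} {v : Fin ℓ → F} (hv : Function.Injective v) :
    Function.Bijective (fun (c : Fin ℓ → F) => fun h : Fin ℓ => ∑ j, c j * v j ^ (h : ℕ)) := by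
  have hmv : (fun (c : Fin ℓ → F) => fun h : Fin ℓ => ∑ j, c j * v j ^ (h : ℕ))
      = ((Matrix.vandermonde v).transpose).mulVec := by
    funext c h
    simp only [Matrix.mulVec, dotProduct, Matrix.transpose_apply,
      Matrix.vandermonde_apply]
    exact Finset.sum_congr rfl fun j _ => mul_comm _ _
  have hunit : IsUnit ((Matrix.vandermonde v).transpose) := by
    rw [Matrix.isUnit_iff_isUnit_det, Matrix.det_transpose]
    exact (Matrix.det_vandermonde_ne_zero_iff.mpr hv).isUnit
  rw [hmv]
  exact ⟨Matrix.mulVec_injective_iff_isUnit.mpr hunit,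
    Matrix.mulVec_surjective_iff_isUnit.mpr hunit⟩

lemma arith_fwd {n ℓ k a h m : ℕ} (hk : k < n) (ha : a < ℓ) (hh : h < ℓ)
    (hm : m < n - (if h < ℓ - a then k else k + 1)) :
    h + m * ℓ < ℓ * n - (ℓ * k + a) := by
  have hcomm : m * ℓ = ℓ * m := mul_comm m ℓ
  split_ifs at hm with hcase
  · have h1 : ℓ * (m + 1 + k) ≤ ℓ * n := Nat.mul_le_mul_left ℓ (by omega)
    have h2 : ℓ * (m + 1 + k) = ℓ * m + ℓ + ℓ * k := by ring
    omega
  · have h1 : ℓ * (m + 2 + k) ≤ ℓ * n := Nat.mul_le_mul_left ℓ (by omega)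
    have h2 : ℓ * (m + 2 + k) = ℓ * m + ℓ + ℓ + ℓ * k := by ring
    omega

lemma arith_bwd {n ℓ k a h q : ℕ} (hℓ : 1 ≤ ℓ) (ha : a < ℓ) (hh : h < ℓ)
    (hq : h + ℓ * q < ℓ * n - (ℓ * k + a)) :
    q < n - (if h < ℓ - a then k else k + 1) := by
  split_ifs with hcase
  · have h1 : ℓ * (q + k) < ℓ * n := by
      have h2 : ℓ * (q + k) = ℓ * q + ℓ * k := by ring
      omega
    have := Nat.lt_of_mul_lt_mul_left h1
    omega
  · have h1 : ℓ * (q + k + 1) < ℓ * n := by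
      have h2 : ℓ * (q + k + 1) = ℓ * q + ℓ * k + ℓ := by ring
      omega
    have := Nat.lt_of_mul_lt_mul_left h1
    omega

/-- the unraveling map is an F-linear bijection from the unraveling
Reed–Solomon code onto the interleaved code. -/
theorem unravel_linear_bijection {F : Type*} [Field F]
    (n ℓ k a : ℕ) (hℓ : 1 ≤ ℓ) (hk : k < n) (ha : a < ℓ)
    (G : Polynomial F) (hGdeg : G.natDegree = ℓ)
    (β : Fin n → Fin ℓ → F)
    (hβ : Function.Injective (fun p : Fin n × Fin ℓ => β p.1 p.2))
    (α : Fin n → F) (hα : ∀ i j, G.eval (β i j) = α i)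
    (hαdist : Function.Injective α) :
    IsLinearMap F
      (fun (C : Fin n → Fin ℓ → F) => fun i (h : Fin ℓ) =>
        ∑ j, C i j * β i j ^ (h : ℕ)) ∧
    Set.BijOn
      (fun (C : Fin n → Fin ℓ → F) => fun i (h : Fin ℓ) =>
        ∑ j, C i j * β i j ^ (h : ℕ))
      {C : Fin n → Fin ℓ → F |
        ∀ m < ℓ * n - (ℓ * k + a), ∑ i, ∑ j, C i j * β i j ^ m = 0}
      {U : Fin n → Fin ℓ → F |
        ∀ h : Fin ℓ, ∀ m < n - (if (h : ℕ) < ℓ - a then k else k + 1),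
          ∑ i, U i h * α i ^ m = 0} := by
  have hG0 : G ≠ 0 := by
    intro h; rw [h, Polynomial.natDegree_zero] at hGdeg; omega
  have hβi : ∀ i, Function.Injective (β i) := by
    intro i j1 j2 hj
    have : ((i, j1) : Fin n × Fin ℓ) = (i, j2) := hβ hj
    exact (Prod.ext_iff.mp this).2
  have hsrc : ∀ (C : Fin n → Fin ℓ → F) (m : ℕ),
      ∑ p : Fin n × Fin ℓ, C p.1 p.2 * β p.1 p.2 ^ m = ∑ i, ∑ j, C i j * β i j ^ m :=
    fun C m => Fintype.sum_prod_type _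
  have keyeval : ∀ (C : Fin n → Fin ℓ → F) (h m : ℕ),
      ∑ p : Fin n × Fin ℓ, C p.1 p.2 * (β p.1 p.2 ^ h * α p.1 ^ m)
      = ∑ i, (∑ j, C i j * β i j ^ h) * α i ^ m := by
    intro C h m
    rw [Fintype.sum_prod_type]
    refine Finset.sum_congr rfl fun i _ => ?_
    rw [Finset.sum_mul]
    exact Finset.sum_congr rfl fun j _ => by ring
  constructor
  · constructor
    · intro C C'
      funext i h
      simp [add_mul, Finset.sum_add_distrib]
    · intro r C
      funext i h
      simp [Finset.mul_sum, mul_assoc]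
  refine ⟨?_, ?_, ?_⟩
  · -- MapsTo
    intro C hC
    simp only [Set.mem_setOf_eq] at hC ⊢
    intro h m hm
    have h0 : ∀ m' < ℓ * n - (ℓ * k + a),
        ∑ p : Fin n × Fin ℓ, C p.1 p.2 * β p.1 p.2 ^ m' = 0 := by
      intro m' hm'
      rw [hsrc]; exact hC m' hm'
    have hsupp : ∀ mm ∈ (Polynomial.X ^ (h : ℕ) * G ^ m).support,
        mm < ℓ * n - (ℓ * k + a) := by
      intro mm hmm
      have hdeg : (Polynomial.X ^ (h : ℕ) * G ^ m).natDegree = (h : ℕ) + m * ℓ := by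
        rw [Polynomial.natDegree_mul (pow_ne_zero _ Polynomial.X_ne_zero)
          (pow_ne_zero _ hG0), Polynomial.natDegree_X_pow, Polynomial.natDegree_pow, hGdeg]
      exact lt_of_le_of_lt (le_trans (Polynomial.le_natDegree_of_mem_supp mm hmm) hdeg.le)
        (arith_fwd hk ha h.isLt hm)
    have := sum_eval_zero_of_pow h0 hsupp
    simp only [Polynomial.eval_mul, Polynomial.eval_pow, Polynomial.eval_X, hα] at this
    rw [← keyeval C (h : ℕ) m]
    exact this
  · -- InjOn
    have hinj : Function.Injective
        (fun (C : Fin n → Fin ℓ → F) => fun i (h : Fin ℓ) =>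
          ∑ j, C i j * β i j ^ (h : ℕ)) := by
      intro C C' hCC
      funext i j
      exact congrFun ((vand_bij (hβi i)).injective (congrFun hCC i)) j
    exact hinj.injOn
  · -- SurjOn
    intro U hU
    simp only [Set.mem_setOf_eq] at hU
    have hsurj_i : ∀ i, ∃ c : Fin ℓ → F,
        (fun h : Fin ℓ => ∑ j, c j * β i j ^ (h : ℕ)) = U i :=
      fun i => (vand_bij (hβi i)).surjective (U i)
    choose C hCdef using hsurj_i
    refine ⟨C, ?_, ?_⟩
    · simp only [Set.mem_setOf_eq]
      intro m hm
      rw [← hsrc C m]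
      refine sum_pow_zero_of_eval hℓ hGdeg ?_ m hm
      intro h q hh hq
      simp only [hα]
      rw [keyeval C h q]
      have hrow : ∀ i, ∑ j, C i j * β i j ^ h = U i ⟨h, hh⟩ :=
        fun i => congrFun (hCdef i) ⟨h, hh⟩
      calc ∑ i, (∑ j, C i j * β i j ^ h) * α i ^ q
          = ∑ i, U i ⟨h, hh⟩ * α i ^ q :=
            Finset.sum_congr rfl fun i _ => by rw [hrow i]
        _ = 0 := hU ⟨h, hh⟩ q (arith_bwd hℓ ha hh hq)
    · funext i h
      exact congrFun (hCdef i) h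
end

section
/- Despite being a polynomial of degree greater than 1 (when W ≠ 0), the evaluation map x ↦ G_W(x) from F to F is a K-linear map: for all a ∈ K and x, y ∈ F, G_W(a·x) = a·G_W(x) and G_W(x+y) = G_W(x) + G_W(y). -/
open Finset Polynomial

section Aux
variable {K F : Type*} [Field K] [Fintype K] [Field F] [Algebra K F]
  (W : Submodule K F) [Fintype W]

lemma GW_scalar (a : K) (x : F) :
    (∏ w : W, (a • x - (w : F))) = a • ∏ w : W, (x - (w : F)) := by
  rcases eq_or_ne a 0 with rfl | ha
  · rw [zero_smul, zero_smul]
    exact Finset.prod_eq_zero (Finset.mem_univ (⟨0, W.zero_mem⟩ : W)) (by simp)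
  · have key : ∀ w : W, a • x - (w : F) = (algebraMap K F a) * (x - ((a⁻¹ • w : W) : F)) := by
      intro w
      have h1 : (algebraMap K F a) * ((a⁻¹ • w : W) : F) = (w : F) := by
        rw [Submodule.coe_smul, ← Algebra.smul_def, smul_smul, mul_inv_cancel₀ ha, one_smul]
      rw [mul_sub, h1, Algebra.smul_def]
    rw [Finset.prod_congr rfl (fun w _ => key w), Finset.prod_mul_distrib,
      Finset.prod_const]
    let e : W ≃ W :=
      { toFun := fun w => a⁻¹ • w
        invFun := fun w => a • w
        left_inv := fun w => by simp [smul_smul, mul_inv_cancel₀ ha]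
        right_inv := fun w => by simp [smul_smul, inv_mul_cancel₀ ha] }
    rw [Fintype.prod_equiv e (fun w => x - ((a⁻¹ • w : W) : F)) (fun w => x - (w : F))
      (fun w => rfl)]
    rw [← map_pow, Finset.card_univ, Module.card_eq_pow_finrank (K := K) (V := W),
      FiniteField.pow_card_pow, Algebra.smul_def]

lemma GW_add (x y : F) :
    (∏ w : W, (x + y - (w : F))) =
      (∏ w : W, (x - (w : F))) + ∏ w : W, (y - (w : F)) := by
  classical
  set n := Fintype.card W with hn
  have hn1 : 0 < n := Fintype.card_pos
  set A : F[X] := ∏ w : W, (X - C ((w : F) - y)) with hA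
  set B : F[X] := ∏ w : W, (X - C ((w : F))) with hB
  set p : F[X] := A - B - C (∏ w : W, (y - (w : F))) with hp
  have hp0 : p = 0 := by
    rcases eq_or_ne p 0 with h | h
    · exact h
    have hm1 : A.Monic := monic_prod_of_monic _ _ fun w _ => monic_X_sub_C _
    have hm2 : B.Monic := monic_prod_of_monic _ _ fun w _ => monic_X_sub_C _
    have hd1 : A.natDegree = n := by
      rw [hA, natDegree_prod _ _ fun w _ => (monic_X_sub_C _).ne_zero]
      simp only [natDegree_X_sub_C, Finset.sum_const, smul_eq_mul, mul_one, Finset.card_univ, hn]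
    have hd2 : B.natDegree = n := by
      rw [hB, natDegree_prod _ _ fun w _ => (monic_X_sub_C _).ne_zero]
      simp only [natDegree_X_sub_C, Finset.sum_const, smul_eq_mul, mul_one, Finset.card_univ, hn]
    have hdeg : p.degree < (n : WithBot ℕ) := by
      have hsub : (A - B).degree < (n : WithBot ℕ) := by
        have h12 : A.degree = B.degree := by
          rw [degree_eq_natDegree hm1.ne_zero, degree_eq_natDegree hm2.ne_zero, hd1, hd2]
        have := Polynomial.degree_sub_lt h12 hm1.ne_zero
          (hm1.leadingCoeff.trans hm2.leadingCoeff.symm)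
        rwa [degree_eq_natDegree hm1.ne_zero, hd1] at this
      refine lt_of_le_of_lt (degree_sub_le _ _) (max_lt hsub ?_)
      exact lt_of_le_of_lt degree_C_le (by exact_mod_cast hn1)
    apply eq_zero_of_natDegree_lt_card_of_eval_eq_zero p
      (Subtype.val_injective : Function.Injective ((↑) : W → F))
    · intro w₀
      rw [hp, hA, hB]
      simp only [eval_sub, eval_prod, eval_X, eval_C]
      have h2 : (∏ w : W, ((w₀ : F) - (w : F))) = 0 :=
        Finset.prod_eq_zero (Finset.mem_univ w₀) (by simp)
      have h1 : (∏ w : W, ((w₀ : F) - ((w : F) - y))) = ∏ w : W, (y - (w : F)) := by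
        refine Fintype.prod_equiv (Equiv.subRight w₀) _ _ fun w => ?_
        show (w₀ : F) - ((w : F) - y) = y - ((w - w₀ : W) : F)
        push_cast
        ring
      rw [h1, h2]
      ring
    · rw [← hn]
      exact (natDegree_lt_iff_degree_lt h).mpr hdeg
  have hev := congrArg (eval x) hp0
  rw [hp, hA, hB] at hev
  simp only [eval_sub, eval_prod, eval_X, eval_C, eval_zero] at hev
  have h3 : (∏ w : W, (x - ((w : F) - y))) = ∏ w : W, (x + y - (w : F)) :=
    Finset.prod_congr rfl fun w _ => by ring
  rw [h3] at hev
  linear_combination hev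

end Aux

/-- the evaluation map `x ↦ G_W(x) = ∏_{w ∈ W} (x - w)` is K-linear. -/
theorem GW_eval_linear {K F : Type*} [Field K] [Fintype K] [Field F] [Algebra K F]
    (W : Submodule K F) [Fintype W] :
    ∀ (a : K) (x y : F),
      (∏ w : W, (a • x - (w : F))) = a • ∏ w : W, (x - (w : F)) ∧
      (∏ w : W, (x + y - (w : F))) =
        (∏ w : W, (x - (w : F))) + ∏ w : W, (y - (w : F)) := by
  intro a x y
  exact ⟨GW_scalar W a x, GW_add W x y⟩
end

section
/- The set of roots of G_W in F is exactly W (i.e., for x ∈ F, G_W(x) = 0 if and only if x ∈ W), and the evaluation map x ↦ G_W(x) is |W|-to-one: for every α in the image of this map, the fiber {x ∈ F : G_W(x) = α} has exactly |W| elements. -/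
open Finset Polynomial

private lemma GW_translate {K F : Type*} [Field K] [Field F] [Algebra K F]
    (W : Submodule K F) [Fintype W] (x : F) (w : W) :
    (∏ v : W, ((x + (w : F)) - (v : F))) = ∏ v : W, (x - (v : F)) := by
  refine (Fintype.prod_bijective (Equiv.addRight w) (Equiv.addRight w).bijective
    (fun v => x - (v : F)) (fun v => (x + (w : F)) - (v : F)) ?_).symm
  intro v
  simp [Equiv.addRight]

/-- the roots of `G_W` in `F` are exactly `W`, and the evaluation map
`x ↦ G_W(x)` is `|W|`-to-one. -/
theorem GW_roots_and_fibers {K F : Type*} [Field K] [Fintype K] [Field F] [Algebra K F]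
    (W : Submodule K F) [Fintype W] :
    (∀ x : F, (∏ w : W, (x - (w : F))) = 0 ↔ x ∈ W) ∧
    (∀ α : F, (∃ x : F, (∏ w : W, (x - (w : F))) = α) →
      {x : F | (∏ w : W, (x - (w : F))) = α}.ncard = Fintype.card W) := by
  constructor
  · intro x
    rw [Finset.prod_eq_zero_iff]
    constructor
    · rintro ⟨w, -, hw⟩
      rw [sub_eq_zero.mp hw]; exact w.2
    · intro hx
      exact ⟨⟨x, hx⟩, Finset.mem_univ _, by simp⟩
  · classical
    rintro α ⟨x₀, hx₀⟩
    set S : Set F := {x : F | (∏ w : W, (x - (w : F))) = α} with hS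
    -- the polynomial
    set Q : F[X] := ∏ w : W, (X - C (w : F)) with hQ
    set P : F[X] := Q - C α with hP
    have hQdeg : Q.natDegree = Fintype.card W := by
      rw [hQ, Polynomial.natDegree_prod]
      · simp
      · intro w _; exact X_sub_C_ne_zero _
    have hcardpos : 0 < Fintype.card W := Fintype.card_pos
    have hPdeg : P.natDegree = Fintype.card W := by
      rw [hP, Polynomial.natDegree_sub_C, hQdeg]
    have hPne : P ≠ 0 := by
      intro h
      rw [h, Polynomial.natDegree_zero] at hPdeg
      omega
    have hevalQ : ∀ x : F, Q.eval x = ∏ w : W, (x - (w : F)) := by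
      intro x; rw [hQ, Polynomial.eval_prod]; simp
    have hSroots : S ⊆ ↑P.roots.toFinset := by
      intro x hx
      rw [Finset.mem_coe, Multiset.mem_toFinset, Polynomial.mem_roots hPne,
        Polynomial.IsRoot, hP, Polynomial.eval_sub, Polynomial.eval_C, hevalQ, sub_eq_zero]
      exact hx
    have hSfin : S.Finite := Set.Finite.subset (P.roots.toFinset : Finset F).finite_toSet hSroots
    have hupper : S.ncard ≤ Fintype.card W := by
      calc S.ncard ≤ (↑P.roots.toFinset : Set F).ncard :=
            Set.ncard_le_ncard hSroots (P.roots.toFinset : Finset F).finite_toSet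
        _ = P.roots.toFinset.card := Set.ncard_coe_finset _
        _ ≤ Multiset.card P.roots := Multiset.toFinset_card_le _
        _ ≤ P.natDegree := Polynomial.card_roots' P
        _ = Fintype.card W := hPdeg
    have hlower : Fintype.card W ≤ S.ncard := by
      have hsub : (fun w : W => x₀ + (w : F)) '' Set.univ ⊆ S := by
        rintro _ ⟨w, -, rfl⟩
        show (∏ v : W, ((x₀ + (w : F)) - (v : F))) = α
        rw [GW_translate W x₀ w, hx₀]
      have hinj : Function.Injective (fun w : W => x₀ + (w : F)) := by
        intro a b h
        simp only [add_right_injective] at h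
        exact Subtype.ext (by simpa using h)
      calc Fintype.card W = (Set.univ : Set W).ncard := by
            rw [Set.ncard_univ]; simp [Nat.card_eq_fintype_card]
        _ = ((fun w : W => x₀ + (w : F)) '' Set.univ).ncard :=
            (Set.ncard_image_of_injective _ hinj).symm
        _ ≤ S.ncard := Set.ncard_le_ncard hsub hSfin
    omega
end

section
/- For every y ∈ F, the polynomial H_y(X) := G_W(X + y) − G_W(X) − G_W(y) is the zero polynomial in F[X]; equivalently, G_W(X + y) = G_W(X) + G_W(y) as polynomials. -/
open Finset Polynomial

/-- for every `y ∈ F`, `G_W(X + y) = G_W(X) + G_W(y)` as polynomials;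
equivalently `H_y(X) := G_W(X + y) - G_W(X) - G_W(y)` is the zero polynomial. -/
theorem GW_comp_add_eq {K F : Type*} [Field K] [Fintype K] [Field F] [Algebra K F]
    (W : Submodule K F) [Fintype W] (y : F) :
    (∏ v : W, (X - C (v : F))).comp (X + C y) - (∏ v : W, (X - C (v : F)))
      - C (∏ v : W, (y - (v : F))) = 0 ∧
    (∏ v : W, (X - C (v : F))).comp (X + C y)
      = (∏ v : W, (X - C (v : F))) + C (∏ v : W, (y - (v : F))) := by
  set G : F[X] := ∏ v : W, (X - C (v : F)) with hG
  have hmonic : G.Monic := monic_prod_of_monic _ _ fun v _ => monic_X_sub_C _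
  have hdegG : G.natDegree = Fintype.card W := by
    rw [hG, natDegree_prod _ _ fun v _ => X_sub_C_ne_zero _]
    simp [natDegree_X_sub_C]
  have hcard : 0 < Fintype.card W := Fintype.card_pos
  have hGne : G ≠ 0 := hmonic.ne_zero
  have hcomp_monic : (G.comp (X + C y)).Monic := hmonic.comp_X_add_C y
  have hdegcomp : (G.comp (X + C y)).natDegree = G.natDegree := by
    rw [natDegree_comp]; simp
  have hcompne : G.comp (X + C y) ≠ 0 := hcomp_monic.ne_zero
  -- the difference has small degree
  have hdegsub : (G.comp (X + C y) - G).degree < (Fintype.card W : ℕ) := by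
    rcases eq_or_ne (G.comp (X + C y) - G) 0 with h | h
    · rw [h]; exact_mod_cast WithBot.bot_lt_coe _
    have hd : (G.comp (X + C y)).degree = G.degree := by
      rw [degree_eq_natDegree hcompne, degree_eq_natDegree hGne, hdegcomp]
    have := degree_sub_lt hd hcompne
      (by rw [Monic.leadingCoeff hcomp_monic, Monic.leadingCoeff hmonic])
    calc (G.comp (X + C y) - G).degree < (G.comp (X + C y)).degree := this
      _ = ((Fintype.card W : ℕ) : WithBot ℕ) := by
          rw [degree_eq_natDegree hcompne, hdegcomp, hdegG]
  have hdegH : (G.comp (X + C y) - G - C (∏ v : W, (y - (v : F)))).natDegree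
      < Fintype.card W := by
    have h1 : (G.comp (X + C y) - G - C (∏ v : W, (y - (v : F)))).degree
        < (Fintype.card W : ℕ) := by
      refine lt_of_le_of_lt (degree_sub_le _ _) (max_lt hdegsub ?_)
      exact lt_of_le_of_lt degree_C_le (by exact_mod_cast Nat.cast_pos.mpr hcard)
    rcases eq_or_ne (G.comp (X + C y) - G - C (∏ v : W, (y - (v : F)))) 0 with h | h
    · rw [h]; simpa using hcard
    · exact (natDegree_lt_iff_degree_lt h).mpr h1
  have hzero : G.comp (X + C y) - G - C (∏ v : W, (y - (v : F))) = 0 := by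
    apply eq_zero_of_natDegree_lt_card_of_eval_eq_zero _
      (Subtype.val_injective : Function.Injective ((↑) : W → F)) _ hdegH
    intro x
    have hGx : G.eval (x : F) = 0 := by
      rw [hG, eval_prod]
      exact Finset.prod_eq_zero (Finset.mem_univ x) (by simp)
    have hGxy : G.eval ((x : F) + y) = ∏ v : W, (y - (v : F)) := by
      rw [hG, eval_prod]
      simp only [eval_sub, eval_X, eval_C]
      refine Fintype.prod_equiv (Equiv.subRight x) _ _ (fun v => ?_)
      simp only [Equiv.subRight_apply]
      push_cast
      ring
    have h1 : eval (x : F) (G.comp (X + C y)) = G.eval ((x : F) + y) := by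
      rw [eval_comp]; simp
    simp only [eval_sub, eval_C, h1, hGx, hGxy]
    ring
  exact ⟨hzero, by linear_combination hzero⟩
end

section
/- In the finite field F with 2^8 = 256 elements, the set of elements α ∈ F such that the polynomial (X² − X)³ − α has exactly 6 distinct roots in F (i.e., splits into 6 distinct roots) has cardinality exactly 21. -/
open Finset Polynomial

namespace SplitGF256

open scoped Classical

set_option linter.unusedSectionVars false
set_option linter.unusedTactic false

variable {F : Type*} [Field F] [Fintype F]

private def trF (x : F) : F := ∑ i ∈ Finset.range 8, x ^ (2:ℕ) ^ i

private lemma trF_explicit (x : F) :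
    trF x = x^128 + x^64 + x^32 + x^16 + x^8 + x^4 + x^2 + x := by
  simp [trF, Finset.sum_range_succ]
  ring

private lemma char_two (hF : Fintype.card F = 256) : CharP F 2 := by
  haveI := ringChar.charP F
  have hp : Nat.Prime (ringChar F) := CharP.char_is_prime F (ringChar F)
  obtain ⟨n, -, hcard⟩ := FiniteField.card F (ringChar F)
  have h2 : ringChar F = 2 := by
    have hdvd : ringChar F ∣ 2 ^ 8 := by
      have : ringChar F ∣ ringChar F ^ (n : ℕ) := dvd_pow_self _ n.ne_zero
      rw [← hcard, hF] at this
      exact_mod_cast this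
    have := hp.dvd_of_dvd_pow hdvd
    exact (Nat.prime_dvd_prime_iff_eq hp Nat.prime_two).mp this
  rw [← h2]; exact ringChar.charP F

section withChar
variable (hch : CharP F 2)
include hch

private lemma two_eq_zero : (2 : F) = 0 := by
  haveI := hch
  exact_mod_cast CharP.cast_eq_zero F 2

private lemma trF_add (x y : F) : trF (x + y) = trF x + trF y := by
  haveI := hch
  haveI : Fact (Nat.Prime 2) := ⟨Nat.prime_two⟩
  simp only [trF, ← Finset.sum_add_distrib]
  exact Finset.sum_congr rfl fun i _ => add_pow_char_pow x y 2 i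

private lemma phi_add (x y : F) :
    (x + y)^2 - (x + y) = (x^2 - x) + (y^2 - y) := by
  linear_combination (x * y) * two_eq_zero hch

end withChar

private lemma trF_zero : trF (0 : F) = 0 := by
  simp [trF]

section withCard
variable (hF : Fintype.card F = 256)
include hF

private lemma pow256 (x : F) : x ^ (256:ℕ) = x := by
  rw [← hF]; exact FiniteField.pow_card x

private lemma trF_sq (x : F) : (trF x) ^ 2 = trF x := by
  haveI := char_two hF
  haveI : Fact (Nat.Prime 2) := ⟨Nat.prime_two⟩
  have h1 : (trF x) ^ 2 = ∑ i ∈ Finset.range 8, x ^ (2:ℕ) ^ (i+1) := by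
    rw [trF, sum_pow_char]
    exact Finset.sum_congr rfl fun i _ => by
      rw [← pow_mul, pow_succ]
  rw [h1, trF, Finset.sum_range_succ, Finset.sum_range_succ' (fun i => x ^ (2:ℕ)^i) 7]
  norm_num [pow256 hF]

private lemma trF_val (x : F) : trF x = 0 ∨ trF x = 1 := by
  have h := trF_sq hF x
  have h2 : trF x * (trF x - 1) = 0 := by linear_combination h
  rcases mul_eq_zero.mp h2 with h' | h'
  · exact Or.inl h'
  · exact Or.inr (sub_eq_zero.mp h')

private lemma trF_sq_arg (x : F) : trF (x ^ 2) = trF x := by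
  haveI := char_two hF
  haveI : Fact (Nat.Prime 2) := ⟨Nat.prime_two⟩
  have h : trF (x ^ 2) = (trF x) ^ 2 := by
    rw [trF, trF, sum_pow_char]
    exact Finset.sum_congr rfl fun i _ => by rw [← pow_mul, ← pow_mul, mul_comm]
  rw [h, trF_sq hF]

private lemma trF_phi (x : F) : trF (x ^ 2 - x) = 0 := by
  haveI := char_two hF
  have h : x ^ 2 - x = x ^ 2 + x := by rw [sub_eq_add_neg, CharTwo.neg_eq]
  rw [h, trF_add (char_two hF), trF_sq_arg hF, ← two_mul,
    two_eq_zero (char_two hF), zero_mul]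

private lemma fiber_card (β : F) (hβ : ∃ x₀ : F, x₀^2 - x₀ = β) :
    (univ.filter fun x : F => x^2 - x = β).card = 2 := by
  haveI := char_two hF
  have h2 := two_eq_zero (char_two hF)
  obtain ⟨x₀, hx₀⟩ := hβ
  have hset : (univ.filter fun x : F => x^2 - x = β) = {x₀, x₀ + 1} := by
    ext x
    simp only [Finset.mem_filter, Finset.mem_univ, true_and, Finset.mem_insert,
      Finset.mem_singleton]
    constructor
    · intro hx
      have hsum : (x + x₀)^2 - (x + x₀) = 0 := by
        rw [phi_add (char_two hF), hx, hx₀, ← two_mul, h2, zero_mul]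
      have hmul : (x + x₀) * ((x + x₀) - 1) = 0 := by linear_combination hsum
      rcases mul_eq_zero.mp hmul with h' | h'
      · left; linear_combination h' - x₀ * h2
      · right; linear_combination h' - x₀ * h2
    · rintro (rfl | rfl)
      · exact hx₀
      · linear_combination hx₀ + x₀ * h2
  rw [hset]
  exact Finset.card_pair (fun h => one_ne_zero (by linear_combination -h : (1:F) = 0))

private lemma T_card :
    (univ.filter fun β : F => ∃ x : F, x^2 - x = β).card = 128 := by
  have himg : (univ.filter fun β : F => ∃ x : F, x^2 - x = β)
      = univ.image (fun x : F => x^2 - x) := by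
    ext β; simp [eq_comm]
  have hcount := Finset.card_eq_sum_card_fiberwise
    (f := fun x : F => x^2 - x) (s := univ) (t := univ.image (fun x : F => x^2 - x))
    (fun x _ => Finset.mem_image_of_mem _ (Finset.mem_univ x))
  rw [Finset.card_univ, hF] at hcount
  have hfib : ∀ β ∈ univ.image (fun x : F => x^2 - x),
      (univ.filter fun x : F => x^2 - x = β).card = 2 := by
    intro β hβ
    obtain ⟨x, -, hx⟩ := Finset.mem_image.mp hβ
    exact fiber_card hF β ⟨x, hx⟩
  rw [Finset.sum_congr rfl hfib, Finset.sum_const, smul_eq_mul] at hcount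
  rw [himg]
  omega

private lemma ker_card_le :
    (univ.filter fun β : F => trF β = 0).card ≤ 128 := by
  set P : F[X] := X^128 + X^64 + X^32 + X^16 + X^8 + X^4 + X^2 + X with hP
  have hdeg : P.natDegree = 128 := by
    rw [hP]; compute_degree!
  have hP0 : P ≠ 0 := fun h => by simp [h] at hdeg
  have hsub : (univ.filter fun β : F => trF β = 0) ⊆ P.roots.toFinset := by
    intro β hβ
    simp only [Finset.mem_filter] at hβ
    rw [Multiset.mem_toFinset, Polynomial.mem_roots hP0]
    show P.eval β = 0
    have heval : P.eval β = trF β := by rw [hP, trF_explicit]; simp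
    rw [heval, hβ.2]
  calc (univ.filter fun β : F => trF β = 0).card
      ≤ P.roots.toFinset.card := Finset.card_le_card hsub
    _ ≤ Multiset.card P.roots := Multiset.toFinset_card_le _
    _ ≤ P.natDegree := Polynomial.card_roots' P
    _ = 128 := hdeg

private lemma T_eq_ker :
    (univ.filter fun β : F => ∃ x : F, x^2 - x = β)
      = (univ.filter fun β : F => trF β = 0) := by
  refine (Finset.eq_of_subset_of_card_le ?_ ?_)
  · intro β hβ
    simp only [Finset.mem_filter, Finset.mem_univ, true_and] at hβ ⊢
    obtain ⟨x, hx⟩ := hβ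
    rw [← hx]; exact trF_phi hF x
  · rw [T_card hF]; exact ker_card_le hF

private lemma exists_root {β : F} (h : trF β = 0) : ∃ x : F, x^2 - x = β := by
  have := T_eq_ker hF
  have hβ : β ∈ (univ.filter fun β : F => trF β = 0) := by
    simp [h]
  rw [← this] at hβ
  simpa using hβ

private lemma ker_card :
    (univ.filter fun β : F => trF β = 0).card = 128 := by
  rw [← T_eq_ker hF, T_card hF]

end withCard



private lemma exists_mu (hF : Fintype.card F = 256) : ∃ μ : F, μ^3 = 1 ∧ μ ≠ 1 := by
  haveI : Fact (Nat.Prime 3) := ⟨by norm_num⟩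
  have hcard : Fintype.card Fˣ = 255 := by rw [Fintype.card_units, hF]
  obtain ⟨u, hu⟩ := exists_prime_orderOf_dvd_card (G := Fˣ) 3 (by rw [hcard]; norm_num)
  refine ⟨(u : F), ?_, ?_⟩
  · have h3 : u ^ 3 = 1 := by rw [← hu]; exact pow_orderOf_eq_one u
    rw [← Units.val_pow_eq_pow_val, h3, Units.val_one]
  · intro h
    have : u = 1 := Units.ext h
    rw [this] at hu
    simp at hu

section mufacts
variable {μ : F} (hμ3 : μ^3 = 1) (hμ1 : μ ≠ 1)
include hμ3 hμ1

private lemma mu_ne_zero : μ ≠ 0 := by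
  intro h; rw [h] at hμ3; norm_num at hμ3

private lemma mu_sum : μ^2 + μ + 1 = 0 := by
  have h : (μ - 1) * (μ^2 + μ + 1) = 0 := by linear_combination hμ3
  rcases mul_eq_zero.mp h with h' | h'
  · exact absurd (by linear_combination h') hμ1
  · exact h'

private lemma mu_sq_ne_one : μ^2 ≠ 1 := by
  intro h
  have : μ = 1 := by
    have := hμ3
    rw [pow_succ, h, one_mul] at this
    exact this
  exact hμ1 this

private lemma mu_ne_mu_sq : μ ≠ μ^2 := by
  intro h
  apply mu_sq_ne_one hμ3 hμ1
  calc μ^2 = μ * μ := by ring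
    _ = μ^2 * μ := by rw [← h]
    _ = μ^3 := by ring
    _ = 1 := hμ3

private lemma cube_roots {β γ : F} (hβ : β ≠ 0) (h : γ^3 = β^3) :
    γ = β ∨ γ = μ*β ∨ γ = μ^2*β := by
  have hmul : (γ - β) * ((γ - μ*β) * (γ - μ^2*β)) = 0 := by
    linear_combination h + (β^2*γ - β*γ^2) * mu_sum hμ3 hμ1 + (β^2*γ - β^3) * hμ3
  rcases mul_eq_zero.mp hmul with h' | h'
  · exact Or.inl (sub_eq_zero.mp h')
  · rcases mul_eq_zero.mp h' with h'' | h''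
    · exact Or.inr (Or.inl (sub_eq_zero.mp h''))
    · exact Or.inr (Or.inr (sub_eq_zero.mp h''))

private lemma triple_card {β : F} (hβ : β ≠ 0) :
    ({β, μ*β, μ^2*β} : Finset F).card = 3 := by
  rw [Finset.card_insert_of_notMem, Finset.card_insert_of_notMem,
    Finset.card_singleton]
  · simp only [Finset.mem_singleton]
    intro h
    exact mu_ne_mu_sq hμ3 hμ1 (mul_right_cancel₀ hβ h)
  · simp only [Finset.mem_insert, Finset.mem_singleton]
    rintro (h | h)
    · exact hμ1 ((mul_left_eq_self₀.mp h.symm).resolve_right hβ)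
    · exact mu_sq_ne_one hμ3 hμ1 ((mul_left_eq_self₀.mp h.symm).resolve_right hβ)

end mufacts




section main
variable (hF : Fintype.card F = 256) {μ : F} (hμ3 : μ^3 = 1) (hμ1 : μ ≠ 1)
include hF hμ3 hμ1

private lemma trF_triple (β : F) : trF β + trF (μ*β) + trF (μ^2*β) = 0 := by
  have hch := char_two hF
  have h : β + (μ*β + μ^2*β) = 0 := by linear_combination β * mu_sum hμ3 hμ1
  have h' := trF_add hch β (μ*β + μ^2*β)
  rw [h, trF_zero, trF_add hch] at h'
  linear_combination -h'

private lemma exists_beta1 : ∃ β : F, trF β = 1 := by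
  by_contra h
  push_neg at h
  have hall : (univ.filter fun β : F => trF β = 0) = univ := by
    ext β
    simp only [Finset.mem_filter, Finset.mem_univ, true_and, iff_true]
    exact (trF_val hF β).resolve_right (h β)
  have h128 := ker_card hF
  rw [hall, Finset.card_univ, hF] at h128
  omega

private lemma exists_delta : ∃ δ : F, trF δ = 0 ∧ trF (μ*δ) = 1 := by
  obtain ⟨β₀, hβ₀⟩ := exists_beta1 hF hμ3 hμ1
  have htrip := trF_triple hF hμ3 hμ1 β₀
  rw [hβ₀] at htrip
  have h2 := two_eq_zero (char_two hF)
  rcases trF_val hF (μ*β₀) with hb | hb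
  · refine ⟨μ*β₀, hb, ?_⟩
    have harg : μ*(μ*β₀) = μ^2*β₀ := by ring
    rw [harg]
    rw [hb] at htrip
    linear_combination htrip - h2
  · refine ⟨μ^2*β₀, ?_, ?_⟩
    · rw [hb] at htrip
      linear_combination htrip - h2
    · have harg : μ*(μ^2*β₀) = β₀ := by linear_combination β₀ * hμ3
      rw [harg, hβ₀]

private lemma U_card :
    (univ.filter fun β : F => trF β = 0 ∧ trF (μ*β) = 0).card = 64 := by
  obtain ⟨δ, hδ0, hδ1⟩ := exists_delta hF hμ3 hμ1
  have hch := char_two hF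
  have h2 := two_eq_zero hch
  set K := univ.filter fun β : F => trF β = 0 with hK
  set U := univ.filter fun β : F => trF β = 0 ∧ trF (μ*β) = 0 with hU
  set W := univ.filter fun β : F => trF β = 0 ∧ trF (μ*β) = 1 with hW
  have hJ : U.card = W.card := by
    apply Finset.card_bij (fun β _ => β + δ)
    · intro β hβ
      simp only [hU, hW, Finset.mem_filter, Finset.mem_univ, true_and] at hβ ⊢
      refine ⟨?_, ?_⟩
      · rw [trF_add hch, hβ.1, hδ0, add_zero]
      · rw [mul_add, trF_add hch, hβ.2, hδ1, zero_add]
    · intro a _ b _ h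
      exact add_right_cancel h
    · intro w hw
      simp only [hW, Finset.mem_filter, Finset.mem_univ, true_and] at hw
      refine ⟨w + δ, ?_, ?_⟩
      · simp only [hU, Finset.mem_filter, Finset.mem_univ, true_and]
        refine ⟨?_, ?_⟩
        · rw [trF_add hch, hw.1, hδ0, add_zero]
        · rw [mul_add, trF_add hch, hw.2, hδ1]
          linear_combination h2
      · have hδδ : δ + δ = 0 := by linear_combination δ * h2
        rw [add_assoc, hδδ, add_zero]
  have hU' : U = K.filter (fun β => trF (μ*β) = 0) := by
    rw [hU, hK, Finset.filter_filter]
  have hW' : W = K.filter (fun β => trF (μ*β) = 1) := by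
    rw [hW, hK, Finset.filter_filter]
  have hneg : K.filter (fun β => ¬ (trF (μ*β) = 0)) = K.filter (fun β => trF (μ*β) = 1) := by
    apply Finset.filter_congr
    intro β _
    rcases trF_val hF (μ*β) with h | h
    · simp [h]
    · simp [h]
  have hsplit := Finset.card_filter_add_card_filter_not
    (s := K) (p := fun β => trF (μ*β) = 0)
  rw [hneg, ← hU', ← hW'] at hsplit
  have hK128 : K.card = 128 := ker_card hF
  omega

private lemma trF_musq {β : F} (h1 : trF β = 0) (h2 : trF (μ*β) = 0) :
    trF (μ^2*β) = 0 := by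
  have := trF_triple hF hμ3 hμ1 β
  rw [h1, h2] at this
  linear_combination this

private lemma U0_filter_eq {β : F} (hβ0 : β ≠ 0) (h1 : trF β = 0) (h2 : trF (μ*β) = 0) :
    ((univ.filter fun b : F => trF b = 0 ∧ trF (μ*b) = 0).erase 0).filter
      (fun b => b^3 = β^3) = {β, μ*β, μ^2*β} := by
  have h3 := trF_musq hF hμ3 hμ1 h1 h2
  have hμ0 := mu_ne_zero hμ3 hμ1
  ext b
  simp only [Finset.mem_filter, Finset.mem_erase, Finset.mem_univ, true_and,
    Finset.mem_insert, Finset.mem_singleton]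
  constructor
  · intro hb
    exact cube_roots hμ3 hμ1 hβ0 hb.2
  · rintro (rfl | rfl | rfl)
    · exact ⟨⟨hβ0, h1, h2⟩, rfl⟩
    · refine ⟨⟨mul_ne_zero hμ0 hβ0, h2, ?_⟩, by linear_combination β^3 * hμ3⟩
      have harg : μ*(μ*β) = μ^2*β := by ring
      rw [harg]; exact h3
    · refine ⟨⟨mul_ne_zero (pow_ne_zero 2 hμ0) hβ0, h3, ?_⟩,
        by linear_combination (μ^3+1) * β^3 * hμ3⟩
      have harg : μ*(μ^2*β) = β := by linear_combination β * hμ3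
      rw [harg]; exact h1

private lemma R_eq_triple {β : F} (hβ0 : β ≠ 0) (h1 : trF β = 0) (h2 : trF (μ*β) = 0) :
    (univ.filter fun b : F => b^3 = β^3 ∧ trF b = 0) = {β, μ*β, μ^2*β} := by
  have h3 := trF_musq hF hμ3 hμ1 h1 h2
  ext b
  simp only [Finset.mem_filter, Finset.mem_univ, true_and, Finset.mem_insert,
    Finset.mem_singleton]
  constructor
  · intro hb
    exact cube_roots hμ3 hμ1 hβ0 hb.1
  · rintro (rfl | rfl | rfl)
    · exact ⟨rfl, h1⟩
    · exact ⟨by linear_combination β^3 * hμ3, h2⟩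
    · exact ⟨by linear_combination (μ^3+1) * β^3 * hμ3, h3⟩

end main

private lemma S_card (hF : Fintype.card F = 256) (α : F) :
    (univ.filter fun x : F => (x^2 - x)^3 = α).card
      = 2 * (univ.filter fun b : F => b^3 = α ∧ trF b = 0).card := by
  have hmap : ∀ x ∈ (univ.filter fun x : F => (x^2 - x)^3 = α),
      (x^2 - x) ∈ (univ.filter fun b : F => b^3 = α ∧ trF b = 0) := by
    intro x hx
    simp only [Finset.mem_filter, Finset.mem_univ, true_and] at hx ⊢
    exact ⟨hx, trF_phi hF x⟩
  rw [Finset.card_eq_sum_card_fiberwise hmap]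
  have hfib : ∀ b ∈ (univ.filter fun b : F => b^3 = α ∧ trF b = 0),
      ((univ.filter fun x : F => (x^2 - x)^3 = α).filter fun x => x^2 - x = b).card = 2 := by
    intro b hb
    simp only [Finset.mem_filter, Finset.mem_univ, true_and] at hb
    have heq : (univ.filter fun x : F => (x^2 - x)^3 = α).filter (fun x => x^2 - x = b)
        = univ.filter fun x : F => x^2 - x = b := by
      rw [Finset.filter_filter]
      apply Finset.filter_congr
      intro x _
      constructor
      · exact fun h => h.2
      · exact fun h => ⟨by rw [h, hb.1], h⟩
    rw [heq]
    exact fiber_card hF b (exists_root hF hb.2)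
  rw [Finset.sum_congr rfl hfib, Finset.sum_const, smul_eq_mul]
  ring

private lemma main_count (hF : Fintype.card F = 256) :
    (univ.filter fun α : F =>
      (univ.filter fun x : F => (x^2 - x)^3 = α).card = 6).card = 21 := by
  obtain ⟨μ, hμ3, hμ1⟩ := exists_mu hF
  set U0 : Finset F := (univ.filter fun β : F => trF β = 0 ∧ trF (μ*β) = 0).erase 0 with hU0
  have hU0card : U0.card = 63 := by
    rw [hU0, Finset.card_erase_of_mem, U_card hF hμ3 hμ1]
    simp only [Finset.mem_filter, Finset.mem_univ, true_and]
    exact ⟨trF_zero, by rw [mul_zero]; exact trF_zero⟩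
  have hU0mem : ∀ b ∈ U0, b ≠ 0 ∧ trF b = 0 ∧ trF (μ*b) = 0 := by
    intro b hb
    rw [hU0] at hb
    simp only [Finset.mem_erase, Finset.mem_filter, Finset.mem_univ, true_and] at hb
    exact ⟨hb.1, hb.2.1, hb.2.2⟩
  have himg : (univ.filter fun α : F =>
      (univ.filter fun x : F => (x^2 - x)^3 = α).card = 6)
      = U0.image (fun β => β^3) := by
    ext α
    simp only [Finset.mem_filter, Finset.mem_univ, true_and, Finset.mem_image]
    rw [S_card hF α]
    constructor
    · intro h6
      have hR3 : (univ.filter fun b : F => b^3 = α ∧ trF b = 0).card = 3 := by omega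
      have hne : (univ.filter fun b : F => b^3 = α ∧ trF b = 0).Nonempty := by
        rw [← Finset.card_pos, hR3]; norm_num
      obtain ⟨β, hβ⟩ := hne
      simp only [Finset.mem_filter, Finset.mem_univ, true_and] at hβ
      have hα0 : α ≠ 0 := by
        intro h0
        have hsub : (univ.filter fun b : F => b^3 = α ∧ trF b = 0) ⊆ {0} := by
          intro b hb
          simp only [Finset.mem_filter, Finset.mem_univ, true_and] at hb
          simp only [Finset.mem_singleton]
          have := hb.1
          rw [h0] at this
          exact pow_eq_zero_iff (by norm_num) |>.mp this
        have := Finset.card_le_card hsub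
        rw [hR3, Finset.card_singleton] at this
        omega
      have hβ0 : β ≠ 0 := by
        intro h0
        rw [h0] at hβ
        rw [← hβ.1] at hα0
        simp at hα0
      have hsub : (univ.filter fun b : F => b^3 = α ∧ trF b = 0)
          ⊆ {β, μ*β, μ^2*β} := by
        intro b hb
        simp only [Finset.mem_filter, Finset.mem_univ, true_and] at hb
        simp only [Finset.mem_insert, Finset.mem_singleton]
        exact cube_roots hμ3 hμ1 hβ0 (by rw [hb.1, ← hβ.1])
      have heq := Finset.eq_of_subset_of_card_le hsub
        (by rw [hR3, triple_card hμ3 hμ1 hβ0])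
      have hμβ : μ*β ∈ (univ.filter fun b : F => b^3 = α ∧ trF b = 0) := by
        rw [heq]
        simp
      simp only [Finset.mem_filter, Finset.mem_univ, true_and] at hμβ
      refine ⟨β, ?_, hβ.1⟩
      rw [hU0]
      simp only [Finset.mem_erase, Finset.mem_filter, Finset.mem_univ, true_and]
      exact ⟨hβ0, hβ.2, hμβ.2⟩
    · rintro ⟨β, hβU, rfl⟩
      obtain ⟨hβ0, h1, h2⟩ := hU0mem β hβU
      rw [R_eq_triple hF hμ3 hμ1 hβ0 h1 h2, triple_card hμ3 hμ1 hβ0]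
  rw [himg]
  have hcount := Finset.card_eq_sum_card_fiberwise
    (f := fun β : F => β^3) (s := U0) (t := U0.image (fun β => β^3))
    (fun x hx => Finset.mem_image_of_mem _ hx)
  rw [hU0card] at hcount
  have hfib : ∀ α ∈ U0.image (fun β => β^3),
      (U0.filter fun β => β^3 = α).card = 3 := by
    intro α hα
    obtain ⟨β, hβU, rfl⟩ := Finset.mem_image.mp hα
    obtain ⟨hβ0, h1, h2⟩ := hU0mem β hβU
    rw [hU0, U0_filter_eq hF hμ3 hμ1 hβ0 h1 h2, triple_card hμ3 hμ1 hβ0]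
  rw [Finset.sum_congr rfl hfib, Finset.sum_const, smul_eq_mul] at hcount
  omega

end SplitGF256

/-- in the field with 256 elements, exactly 21 values `α` are such that
`(X² - X)³ - α` splits into 6 distinct roots. -/
theorem splitting_count_GF256 {F : Type*} [Field F] [Fintype F]
    (hF : Fintype.card F = 256) :
    ({α : F | ({x : F | (x ^ 2 - x) ^ 3 = α}).ncard = 6}).ncard = 21 := by
  classical
  have hset : ∀ p : F → Prop, {x : F | p x}.ncard = (Finset.univ.filter p).card := by
    intro p
    rw [Set.ncard_eq_toFinset_card', Set.toFinset_setOf]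
  have h1 : {α : F | ({x : F | (x ^ 2 - x) ^ 3 = α}).ncard = 6}
      = {α : F | (Finset.univ.filter fun x : F => (x^2 - x)^3 = α).card = 6} := by
    ext α
    rw [Set.mem_setOf_eq, Set.mem_setOf_eq, hset]
  rw [h1, hset]
  convert SplitGF256.main_count hF using 2
  exact Finset.filter_congr_decidable _ _ _
end
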